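/- For n ≥ 1 and t ≥ 1, the deviation of the averaged t-fold public-key state from the maximally mixed state has the explicit form: (1/2^{n−1}) Σ_{k ∈ Ω_n} (ρ_k^0)^{⊗t} − ((1/2^n)·1)^{⊗t} = (1/(2^{n−1}·2^{nt})) Σ_{k ∈ Ω_n} Σ_{i : Fin t → (Fin n → ZMod 2)} Σ_{x : Fin t → ZMod 2, x ≠ 0} E(i, fun s ↦ i s + (x s)•k), where 1 denotes the identity matrix. -/

import Mathlib

/-!
Write `P_v = ∑ i, E(i, i + v)` for the translation by `v`, so that `ρ_k^0 = 2⁻ⁿ (P_0 + P_k)`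
with `P_0 = 1`. Tensor products are multilinear and send tensor products of translations to
translations, so `(ρ_k^0)^{⊗t} = 2^{-nt} ∑_x P_{(x s • k)_s}` over `x : Fin t → ZMod 2`, whose
`x = 0` term is the identity. Averaging over the `2^{n-1}` strings of `Ω_n`, the identity terms
add up to `2^{-nt} · 1 = ((1/2ⁿ) · 1)^{⊗t}`, and what remains is the right-hand side.
-/

open Matrix Finset

/-- Hamming weight of a bit string. -/
def hammingW {n : ℕ} (ν : Fin n → ZMod 2) : ℕ :=
  (Finset.univ.filter fun l => ν l = 1).card

/-- `Ω_n`: the bit strings of length `n` with odd Hamming weight. -/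
def Omega (n : ℕ) : Finset (Fin n → ZMod 2) :=
  Finset.univ.filter fun k => Odd (hammingW k)

/-- The public-key state `ρ_k^0`. -/
noncomputable def rho0 (n : ℕ) (k : Fin n → ZMod 2) :
    Matrix (Fin n → ZMod 2) (Fin n → ZMod 2) ℂ :=
  (1 / 2 ^ n : ℂ) •
    ∑ i : Fin n → ZMod 2, ∑ x : ZMod 2, Matrix.single i (i + x • k) (1 : ℂ)

/-- Tensor product of a `t`-indexed family of matrices over index type `m`. -/
def tensT {t : ℕ} {m : Type*} [Fintype m] (ρ : Fin t → Matrix m m ℂ) :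
    Matrix (Fin t → m) (Fin t → m) ℂ :=
  Matrix.of fun u v => ∏ s, ρ s (u s) (v s)

lemma natCast_hammingW {n : ℕ} (k : Fin n → ZMod 2) : (hammingW k : ZMod 2) = ∑ l, k l := by
  have hbit : ∀ a : ZMod 2, a = if a = 1 then 1 else 0 := by decide
  rw [hammingW, ← sum_boole]
  exact sum_congr rfl fun l _ => (hbit (k l)).symm

lemma mem_Omega_iff {n : ℕ} {k : Fin n → ZMod 2} : k ∈ Omega n ↔ ∑ l, k l = 1 := by
  simp [Omega, ← ZMod.natCast_eq_one_iff_odd, natCast_hammingW]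

/-- `Ω_n` is a fibre of the surjective parity homomorphism `k ↦ ∑ l, k l`. -/
lemma card_Omega {n : ℕ} (hn : 1 ≤ n) : #(Omega n) = 2 ^ (n - 1) := by
  let parity : (Fin n → ZMod 2) →+ ZMod 2 :=
    { toFun := fun k => ∑ l, k l
      map_zero' := by simp
      map_add' := fun _ _ => sum_add_distrib }
  have hsurj : ∀ y, y ∈ Set.range parity :=
    fun y => ⟨Pi.single ⟨0, hn⟩ y, by simp [parity]⟩
  have hOmega : Omega n = ({k | parity k = 1} : Finset _) := by
    ext k; simp [mem_Omega_iff, parity]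
  have hfibre : #{k | parity k = 1} = #{k | parity k = 0} :=
    AddMonoidHom.card_fiber_eq_of_mem_range parity (hsurj 1) (hsurj 0)
  have hcover : #{k | parity k = 1} + #{k | parity k = 0} = 2 ^ n := by
    have hbit : ∀ a : ZMod 2, ¬a = 1 ↔ a = 0 := by decide
    simpa [hbit] using card_filter_add_card_filter_not (s := univ) (fun k => parity k = 1)
  rw [← pow_sub_one_mul (by omega : n ≠ 0)] at hcover
  rw [hOmega]
  omega

section TensorProduct

variable {t : ℕ} {m : Type*} [Fintype m]

lemma tensT_smul (c : Fin t → ℂ) (ρ : Fin t → Matrix m m ℂ) :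
    tensT (fun s => c s • ρ s) = (∏ s, c s) • tensT ρ := by
  ext u v
  simp [tensT, prod_mul_distrib]

lemma tensT_const_smul (c : ℂ) (A : Matrix m m ℂ) :
    tensT (fun _ : Fin t => c • A) = c ^ t • tensT fun _ => A := by
  rw [tensT_smul (fun _ => c), prod_const, card_univ, Fintype.card_fin]

lemma tensT_sum {α : Type*} [Fintype α] (ρ : Fin t → α → Matrix m m ℂ) :
    tensT (fun s => ∑ a, ρ s a) = ∑ p : Fin t → α, tensT fun s => ρ s (p s) := by
  ext u v
  simp [tensT, Matrix.sum_apply, prod_univ_sum]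

lemma tensT_single [DecidableEq m] (i j : Fin t → m) :
    tensT (fun s => single (i s) (j s) (1 : ℂ)) = single i j 1 := by
  ext u v
  simp [tensT, single_apply, Fintype.prod_boole, funext_iff, forall_and]

lemma tensT_one [DecidableEq m] : tensT (fun _ : Fin t => (1 : Matrix m m ℂ)) = 1 := by
  simp_rw [← sum_single_one, tensT_sum, tensT_single]

lemma tensT_translation {G : Type*} [Add G] [Fintype G] [DecidableEq G] (g : Fin t → G) :
    tensT (fun s => ∑ i : G, single i (i + g s) (1 : ℂ))
      = ∑ i : Fin t → G, single i (fun s => i s + g s) 1 := by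
  rw [tensT_sum]
  simp_rw [tensT_single]

end TensorProduct

lemma rho0_eq_smul_sum_translation (n : ℕ) (k : Fin n → ZMod 2) :
    rho0 n k = (1 / 2 ^ n : ℂ) • ∑ x : ZMod 2, ∑ i, single i (i + x • k) (1 : ℂ) := by
  rw [rho0, sum_comm]

lemma tensT_rho0 (n t : ℕ) (k : Fin n → ZMod 2) :
    tensT (fun _ : Fin t => rho0 n k)
      = (1 / 2 ^ (n * t) : ℂ) •
          (1 + ∑ x ∈ univ.filter (fun x : Fin t → ZMod 2 => x ≠ 0),
            ∑ i : Fin t → (Fin n → ZMod 2), single i (fun s => i s + x s • k) (1 : ℂ)) := by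
  have hexpand : tensT (fun _ : Fin t => ∑ x : ZMod 2, ∑ i, single i (i + x • k) (1 : ℂ))
      = ∑ x : Fin t → ZMod 2, ∑ i : Fin t → (Fin n → ZMod 2),
          single i (fun s => i s + x s • k) (1 : ℂ) := by
    rw [tensT_sum]
    exact sum_congr rfl fun x _ => tensT_translation fun s => x s • k
  have hsplit : ∑ x : Fin t → ZMod 2, ∑ i : Fin t → (Fin n → ZMod 2),
        single i (fun s => i s + x s • k) (1 : ℂ)
      = 1 + ∑ x ∈ univ.filter (fun x : Fin t → ZMod 2 => x ≠ 0),
          ∑ i : Fin t → (Fin n → ZMod 2), single i (fun s => i s + x s • k) (1 : ℂ) := by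
    rw [← add_sum_erase univ _ (mem_univ 0), filter_ne']
    congr 1
    simpa using sum_single_one
  rw [rho0_eq_smul_sum_translation, tensT_const_smul, hexpand, hsplit, _root_.one_div_pow,
    ← pow_mul]

theorem averaged_public_key_deviation_general (n t : ℕ) (hn : 1 ≤ n) :
    ((1 / 2 ^ (n - 1) : ℂ) • ∑ k ∈ Omega n, tensT (fun _ : Fin t => rho0 n k))
        - tensT (fun _ : Fin t =>
            (1 / 2 ^ n : ℂ) • (1 : Matrix (Fin n → ZMod 2) (Fin n → ZMod 2) ℂ))
      = (1 / (2 ^ (n - 1) * 2 ^ (n * t)) : ℂ) •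
          ∑ k ∈ Omega n, ∑ i : Fin t → (Fin n → ZMod 2),
            ∑ x ∈ Finset.univ.filter (fun x : Fin t → ZMod 2 => x ≠ 0),
              Matrix.single i (fun s => i s + x s • k) (1 : ℂ) := by
  simp_rw [tensT_rho0, tensT_const_smul, tensT_one, _root_.one_div_pow, ← pow_mul, smul_add,
    sum_add_distrib, sum_const, card_Omega hn, ← smul_sum]
  rw [sum_congr rfl fun k _ => sum_comm]
  match_scalars
  · field_simp
    ring
  · ring

/-- Explicit form of the deviation of the averaged `t`-fold public-key state from the
maximally mixed state. -/
theorem averaged_public_key_deviation (n t : ℕ) (hn : 1 ≤ n) (ht : 1 ≤ t) :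
    ((1 / 2 ^ (n - 1) : ℂ) • ∑ k ∈ Omega n, tensT (fun _ : Fin t => rho0 n k))
        - tensT (fun _ : Fin t =>
            (1 / 2 ^ n : ℂ) • (1 : Matrix (Fin n → ZMod 2) (Fin n → ZMod 2) ℂ))
      = (1 / (2 ^ (n - 1) * 2 ^ (n * t)) : ℂ) •
          ∑ k ∈ Omega n, ∑ i : Fin t → (Fin n → ZMod 2),
            ∑ x ∈ Finset.univ.filter (fun x : Fin t → ZMod 2 => x ≠ 0),
              Matrix.single i (fun s => i s + x s • k) (1 : ℂ) :=
  averaged_public_key_deviation_general n t hn
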